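/- In a one-dimensional BVASS, a state q has unbounded reachability set if and only if reach(q) contains some n > 2^{|Q|}. -/

import Mathlib

/-- A one-dimensional branching vector addition system with states:
branching transitions `br`, unary transitions `un` with update in `{-1,0,1}`,
and final states `final`. -/
structure BVASS1 (Q : Type) where
  br : Q → Q → Q → Prop
  un : Q → ℤ → Q → Prop
  un_small : ∀ q z p, un q z p → z = -1 ∨ z = 0 ∨ z = 1
  final : Q → Prop

/-- A finite binary tree with nodes given by a prefix-closed set of words over
`Bool` and labels in `Q × ℕ`. -/
structure BTree (Q : Type) where
  dom : Set (List Bool)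
  label : List Bool → Q × ℕ
  finite : dom.Finite
  root_mem : ([] : List Bool) ∈ dom
  prefixClosed : ∀ ⦃u v : List Bool⦄, v ∈ dom → u <+: v → u ∈ dom

/-- `u` is a strict ancestor of `v`. -/
def StrictPrefix (u v : List Bool) : Prop := u <+: v ∧ u ≠ v

/-- `u` is the lowest common ancestor of `v` and `w`. -/
def IsLCA (u v w : List Bool) : Prop :=
  u <+: v ∧ u <+: w ∧ ∀ u', u' <+: v → u' <+: w → u' <+: u

namespace BTree

variable {Q : Type}

def state (T : BTree Q) (u : List Bool) : Q := (T.label u).1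

def counter (T : BTree Q) (u : List Bool) : ℕ := (T.label u).2

def IsLeaf (T : BTree Q) (u : List Bool) : Prop :=
  u ∈ T.dom ∧ ∀ b : Bool, u ++ [b] ∉ T.dom

/-- The subtree of `T` rooted at node `u`. -/
def subtree (T : BTree Q) (u : List Bool) (hu : u ∈ T.dom) : BTree Q where
  dom := {x | u ++ x ∈ T.dom}
  label := fun x => T.label (u ++ x)
  finite := Set.Finite.preimage
    (Function.Injective.injOn fun a b h => by simpa using h) T.finite
  root_mem := by simpa using hu
  prefixClosed := by
    rintro a c hc ⟨t, rfl⟩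
    exact T.prefixClosed hc ⟨t, by simp⟩

/-- All counter values in the tree are at most `j`. -/
def Bounded (T : BTree Q) (j : ℕ) : Prop := ∀ u ∈ T.dom, T.counter u ≤ j

/-- All counter values, except possibly the root's, are at most `j`. -/
def AlmostBounded (T : BTree Q) (j : ℕ) : Prop :=
  ∀ u ∈ T.dom, u ≠ [] → T.counter u ≤ j

/-- A node is increasing if it has a strict ancestor with the same state
and a strictly smaller counter value. -/
def Increasing (T : BTree Q) (v : List Bool) : Prop :=
  ∃ u ∈ T.dom, StrictPrefix u v ∧ T.state u = T.state v ∧ T.counter u < T.counter v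

/-- `u` is the anchor of the increasing node `v`: the maximal strict ancestor of `v`
with the same state and strictly smaller counter value. -/
def IsAnchorOf (T : BTree Q) (u v : List Bool) : Prop :=
  u ∈ T.dom ∧ StrictPrefix u v ∧ T.state u = T.state v ∧ T.counter u < T.counter v ∧
    ∀ u' ∈ T.dom, StrictPrefix u' v → T.state u' = T.state v →
      T.counter u' < T.counter v → u' <+: u

/-- The tree is exclusive: the least common ancestor of any two distinct increasing
leaves is a strict ancestor of at least one of their anchors. -/
def Exclusive (T : BTree Q) : Prop :=
  ∀ v w, T.IsLeaf v → T.IsLeaf w → T.Increasing v → T.Increasing w → v ≠ w →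
    ∀ a b l, T.IsAnchorOf a v → T.IsAnchorOf b w → IsLCA l v w →
      StrictPrefix l a ∨ StrictPrefix l b

end BTree

namespace BVASS1

variable {Q : Type}

/-- `T` is a partial reachability tree of `B`: at every inner node either a
branching transition splits the counter over two children, or a unary transition
changes the counter by `z` along a single-child edge. -/
def IsPRT (B : BVASS1 Q) (T : BTree Q) : Prop :=
  ∀ u ∈ T.dom, ¬ T.IsLeaf u →
    ((u ++ [false] ∈ T.dom ∧ u ++ [true] ∈ T.dom ∧
        B.br (T.state u) (T.state (u ++ [false])) (T.state (u ++ [true])) ∧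
        T.counter u = T.counter (u ++ [false]) + T.counter (u ++ [true])) ∨
     (u ++ [false] ∈ T.dom ∧ u ++ [true] ∉ T.dom ∧
        ∃ z : ℤ, B.un (T.state u) z (T.state (u ++ [false])) ∧
          (T.counter (u ++ [false]) : ℤ) = (T.counter u : ℤ) + z))

/-- `T` is a (full) reachability tree of `B`: a partial reachability tree all of
whose leaves are accepting (final state, counter zero). -/
def IsRT (B : BVASS1 Q) (T : BTree Q) : Prop :=
  B.IsPRT T ∧ ∀ u, T.IsLeaf u → B.final (T.state u) ∧ T.counter u = 0

/-- The configuration `q(n)` is reachable. -/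
def Reachable (B : BVASS1 Q) (q : Q) (n : ℕ) : Prop :=
  ∃ T : BTree Q, B.IsRT T ∧ T.label [] = (q, n)

/-- The reachability set of a control state. -/
def reachSet (B : BVASS1 Q) (q : Q) : Set ℕ := {n | B.Reachable q n}

/-- The configuration `q(n)` is coverable. -/
def Coverable (B : BVASS1 Q) (q : Q) (n : ℕ) : Prop :=
  ∃ m, n ≤ m ∧ B.Reachable q m

/-- `T` is expandable: exclusive, every leaf is accepting or increasing, and every
increasing leaf with its anchor induces a positive residue-reachability instance. -/
def Expandable (B : BVASS1 Q) (T : BTree Q) : Prop :=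
  T.Exclusive ∧
  (∀ v, T.IsLeaf v → (B.final (T.state v) ∧ T.counter v = 0) ∨ T.Increasing v) ∧
  (∀ v u, T.IsLeaf v → T.IsAnchorOf u v →
    ∃ l, B.Reachable (T.state v) l ∧ T.counter v ≤ l ∧
      l ≡ T.counter v [MOD T.counter v - T.counter u])

end BVASS1

/-!
Follow a reachability tree downward from a node `x`, at a branching towards a child with the
larger counter. Each step lowers the counter by at most one or at most halves it, so the
first node whose counter drops below that of `x` still carries at least half of it, rounded
down after subtracting one. From a root counter `≥ 2^|Q|` this yields `|Q| + 1` nested nodes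
with strictly decreasing counters, two of which share a state. Grafting the subtree of the
upper one in place of the lower one raises the counters along the path by their difference
`d > 0`; iterating puts `n + k * d` into the reachability set for every `k`.
-/

theorem StrictPrefix.trans {u v w : List Bool} (huv : StrictPrefix u v)
    (hvw : StrictPrefix v w) : StrictPrefix u w := by
  refine ⟨huv.1.trans hvw.1, fun h => ?_⟩
  subst h
  exact huv.2 (huv.1.eq_of_length (le_antisymm huv.1.length_le hvw.1.length_le))

theorem StrictPrefix.append_singleton (u : List Bool) (b : Bool) : StrictPrefix u (u ++ [b]) :=
  ⟨List.prefix_append u [b], by simp⟩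

theorem eq_of_append_singleton_prefix {x y : List Bool} {a b : Bool} (ha : x ++ [a] <+: y)
    (hb : x ++ [b] <+: y) : a = b := by
  rcases List.prefix_or_prefix_of_prefix ha hb with h | h
  · simpa using h.eq_of_length (by simp)
  · simpa using (h.eq_of_length (by simp)).symm

theorem exists_append_singleton_prefix {x u : List Bool} (h : x <+: u) (hne : x ≠ u) :
    ∃ b, x ++ [b] <+: u := by
  obtain ⟨_ | ⟨b, r⟩, rfl⟩ := h
  · simp at hne
  · exact ⟨b, r, by simp⟩

namespace BTree

variable {Q : Type} {T S : BTree Q} {u v x y : List Bool} {b : Bool} {e : ℕ}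

open Classical in
noncomputable def child (T : BTree Q) (x : List Bool) (b : Bool) : Option (Q × ℕ) :=
  if x ++ [b] ∈ T.dom then some (T.label (x ++ [b])) else none

theorem child_of_mem (h : x ++ [b] ∈ T.dom) : T.child x b = some (T.label (x ++ [b])) :=
  if_pos h

theorem child_of_not_mem (h : x ++ [b] ∉ T.dom) : T.child x b = none :=
  if_neg h

theorem child_congr (hmem : x ++ [b] ∈ T.dom ↔ y ++ [b] ∈ S.dom)
    (hlabel : T.label (x ++ [b]) = S.label (y ++ [b])) : T.child x b = S.child y b := by
  by_cases h : x ++ [b] ∈ T.dom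
  · rw [child_of_mem h, child_of_mem (hmem.1 h), hlabel]
  · rw [child_of_not_mem h, child_of_not_mem (mt hmem.2 h)]

theorem exists_length_le (T : BTree Q) : ∃ N, ∀ x ∈ T.dom, x.length ≤ N := by
  obtain ⟨N, hN⟩ := (T.finite.image List.length).bddAbove
  exact ⟨N, fun x hx => hN ⟨x, hx, rfl⟩⟩

@[simp]
theorem subtree_label (hu : u ∈ T.dom) : (T.subtree u hu).label x = T.label (u ++ x) := rfl

theorem subtree_child (hu : u ∈ T.dom) : (T.subtree u hu).child x b = T.child (u ++ x) b :=
  child_congr (by simp [subtree, List.append_assoc]) (by simp [List.append_assoc])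

def Decreasing (T : BTree Q) (v : List Bool) : Prop :=
  ∃ u ∈ T.dom, StrictPrefix u v ∧ T.state u = T.state v ∧ T.counter v < T.counter u

def DropsTo (T : BTree Q) (u v : List Bool) : Prop :=
  v ∈ T.dom ∧ StrictPrefix u v ∧ T.counter v < T.counter u

theorem DropsTo.trans {w : List Bool} (huv : T.DropsTo u v) (hvw : T.DropsTo v w) :
    T.DropsTo u w :=
  ⟨hvw.1, huv.2.1.trans hvw.2.1, hvw.2.2.trans huv.2.2⟩

/-- Replace the subtree of `T` at `u` by `S`, adding `e` to the counters of the strict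
ancestors of `u`. -/
def graft (T : BTree Q) (u : List Bool) (S : BTree Q) (e : ℕ) (hu : u ∈ T.dom) : BTree Q where
  dom := {x | if u <+: x then x.drop u.length ∈ S.dom else x ∈ T.dom}
  label x :=
    if u <+: x then S.label (x.drop u.length)
    else if x <+: u then (T.state x, T.counter x + e) else T.label x
  finite := by
    refine (T.finite.union (S.finite.image (u ++ ·))).subset fun x hx => ?_
    simp only [Set.mem_ofPred_eq] at hx
    split at hx
    · next h => exact Or.inr ⟨x.drop u.length, hx, List.prefix_iff_eq_append.1 h⟩
    · exact Or.inl hx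
  root_mem := by
    simp only [Set.mem_ofPred_eq]
    split
    · next h => simpa [List.prefix_nil.mp h] using S.root_mem
    · exact T.root_mem
  prefixClosed := by
    intro a c hc hac
    simp only [Set.mem_ofPred_eq] at hc ⊢
    by_cases ha : u <+: a
    · obtain ⟨s, rfl⟩ := ha
      obtain ⟨t, rfl⟩ := hac
      simp only [List.append_assoc, List.prefix_append, if_true, List.drop_left] at hc ⊢
      exact S.prefixClosed hc (List.prefix_append s t)
    · rw [if_neg ha]
      by_cases huc : u <+: c
      · rcases List.prefix_or_prefix_of_prefix hac huc with h | h
        · exact T.prefixClosed hu h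
        · exact absurd h ha
      · rw [if_neg huc] at hc
        exact T.prefixClosed hc hac

section graft

variable {hu : u ∈ T.dom}

theorem mem_graft_append : u ++ y ∈ (T.graft u S e hu).dom ↔ y ∈ S.dom := by
  simp [graft]

theorem graft_label_append : (T.graft u S e hu).label (u ++ y) = S.label y := by
  simp [graft]

theorem mem_graft_of_not_prefix (h : ¬ u <+: x) :
    x ∈ (T.graft u S e hu).dom ↔ x ∈ T.dom := by
  simp [graft, h]

theorem graft_label_of_incomparable (hux : ¬ u <+: x) (hxu : ¬ x <+: u) :
    (T.graft u S e hu).label x = T.label x := by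
  simp [graft, hux, hxu]

theorem mem_graft_of_prefix (h : x <+: u) : x ∈ (T.graft u S e hu).dom := by
  by_cases hux : u <+: x
  · obtain rfl := h.eq_of_length (le_antisymm h.length_le hux.length_le)
    simpa using (mem_graft_append (y := []) (hu := hu)).2 S.root_mem
  · exact (mem_graft_of_not_prefix hux).2 (T.prefixClosed hu h)

theorem graft_label_of_prefix (hroot : S.label [] = (T.state u, T.counter u + e))
    (h : x <+: u) : (T.graft u S e hu).label x = (T.state x, T.counter x + e) := by
  by_cases hux : u <+: x
  · obtain rfl := h.eq_of_length (le_antisymm h.length_le hux.length_le)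
    simpa using (graft_label_append (y := []) (hu := hu)).trans hroot
  · simp [graft, hux, h]

theorem graft_child_append : (T.graft u S e hu).child (u ++ y) b = S.child y b :=
  child_congr (by rw [List.append_assoc, mem_graft_append])
    (by rw [List.append_assoc, graft_label_append])

theorem graft_child_of_incomparable (hux : ¬ u <+: x ++ [b]) (hxu : ¬ x ++ [b] <+: u) :
    (T.graft u S e hu).child x b = T.child x b :=
  child_congr (mem_graft_of_not_prefix hux) (graft_label_of_incomparable hux hxu)

theorem graft_child_of_prefix (hroot : S.label [] = (T.state u, T.counter u + e))
    (h : x ++ [b] <+: u) :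
    (T.graft u S e hu).child x b = some (T.state (x ++ [b]), T.counter (x ++ [b]) + e) := by
  rw [child_of_mem (mem_graft_of_prefix h), graft_label_of_prefix hroot h]

end graft

end BTree

namespace BVASS1

open BTree

variable {Q : Type} {B : BVASS1 Q} {T S : BTree Q} {u v : List Bool} {e d : ℕ}

/-- The local condition of a reachability tree at a node labelled `a` whose children carry
the labels `c₀` and `c₁` (`none` for a missing child). -/
def ValidNode (B : BVASS1 Q) (a : Q × ℕ) : Option (Q × ℕ) → Option (Q × ℕ) → Prop
  | none, none => B.final a.1 ∧ a.2 = 0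
  | some l, none => ∃ z, B.un a.1 z l.1 ∧ (l.2 : ℤ) = a.2 + z
  | some l, some r => B.br a.1 l.1 r.1 ∧ a.2 = l.2 + r.2
  | none, some _ => False

theorem ValidNode.shift_left {a l : Q × ℕ} {c : Option (Q × ℕ)}
    (h : B.ValidNode a (some l) c) : B.ValidNode (a.1, a.2 + e) (some (l.1, l.2 + e)) c := by
  rcases c with _ | r
  · obtain ⟨z, hz, hl⟩ := h
    exact ⟨z, hz, by push_cast; omega⟩
  · obtain ⟨hbr, hsum⟩ := h
    exact ⟨hbr, by simp only; omega⟩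

theorem ValidNode.shift_right {a r : Q × ℕ} {c : Option (Q × ℕ)}
    (h : B.ValidNode a c (some r)) : B.ValidNode (a.1, a.2 + e) c (some (r.1, r.2 + e)) := by
  rcases c with _ | l
  · exact h.elim
  · obtain ⟨hbr, hsum⟩ := h
    exact ⟨hbr, by simp only; omega⟩

theorem isRT_iff :
    B.IsRT T ↔ ∀ x ∈ T.dom, B.ValidNode (T.label x) (T.child x false) (T.child x true) := by
  constructor
  · rintro ⟨hstep, hleaf⟩ x hx
    by_cases hl : T.IsLeaf x
    · rw [child_of_not_mem (hl.2 false), child_of_not_mem (hl.2 true)]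
      exact hleaf x hl
    · rcases hstep x hx hl with ⟨hf, ht, hbr, hsum⟩ | ⟨hf, ht, z, hun, hz⟩
      · rw [child_of_mem hf, child_of_mem ht]
        exact ⟨hbr, hsum⟩
      · rw [child_of_mem hf, child_of_not_mem ht]
        exact ⟨z, hun, hz⟩
  · intro h
    refine ⟨fun x hx hl => ?_, fun x hl => ?_⟩
    · have hvalid := h x hx
      by_cases hf : x ++ [false] ∈ T.dom <;> by_cases ht : x ++ [true] ∈ T.dom
      · rw [child_of_mem hf, child_of_mem ht] at hvalid
        exact Or.inl ⟨hf, ht, hvalid⟩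
      · rw [child_of_mem hf, child_of_not_mem ht] at hvalid
        exact Or.inr ⟨hf, ht, hvalid⟩
      · rw [child_of_not_mem hf, child_of_mem ht] at hvalid
        exact hvalid.elim
      · exact absurd ⟨hx, Bool.forall_bool.2 ⟨hf, ht⟩⟩ hl
    · have hvalid := h x hl.1
      rwa [child_of_not_mem (hl.2 false), child_of_not_mem (hl.2 true)] at hvalid

theorem IsRT.subtree (hT : B.IsRT T) (hu : u ∈ T.dom) : B.IsRT (T.subtree u hu) := by
  rw [isRT_iff] at hT ⊢
  intro x hx
  rw [subtree_child, subtree_child]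
  exact hT _ hx

theorem IsRT.graft (hT : B.IsRT T) (hS : B.IsRT S) (hu : u ∈ T.dom)
    (hroot : S.label [] = (T.state u, T.counter u + e)) : B.IsRT (T.graft u S e hu) := by
  rw [isRT_iff] at hT hS ⊢
  intro x hx
  by_cases hux : u <+: x
  · obtain ⟨y, rfl⟩ := hux
    rw [graft_label_append, graft_child_append, graft_child_append]
    exact hS y (mem_graft_append.1 hx)
  by_cases hxu : x <+: u
  · obtain ⟨b, hb⟩ := exists_append_singleton_prefix hxu fun h => hux (h ▸ List.prefix_rfl)
    -- `x` and its child `x ++ [b]` towards `u` are shifted by `e`, the other child is not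
    have hother : (T.graft u S e hu).child x (!b) = T.child x (!b) :=
      graft_child_of_incomparable
        (fun h => Bool.not_ne_self b
          (eq_of_append_singleton_prefix (hb.trans h) List.prefix_rfl).symm)
        (fun h => Bool.not_ne_self b (eq_of_append_singleton_prefix hb h).symm)
    have hvalid := hT x (T.prefixClosed hu hxu)
    rw [graft_label_of_prefix hroot hxu]
    cases b <;> simp only [Bool.not_false, Bool.not_true] at hother <;>
      rw [child_of_mem (T.prefixClosed hu hb)] at hvalid <;>
      rw [graft_child_of_prefix hroot hb, hother]
    exacts [hvalid.shift_left, hvalid.shift_right]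
  · have hchild : ∀ b, (T.graft u S e hu).child x b = T.child x b := fun b =>
      graft_child_of_incomparable
        (fun h => (List.prefix_or_prefix_of_prefix h (List.prefix_append x [b])).elim hux hxu)
        (fun h => hxu ((List.prefix_append x [b]).trans h))
    rw [graft_label_of_incomparable hux hxu, hchild, hchild]
    exact hT x ((mem_graft_of_not_prefix hux).1 hx)

theorem IsRT.reachable (hT : B.IsRT T) (hu : u ∈ T.dom) : B.Reachable (T.state u) (T.counter u) :=
  ⟨T.subtree u hu, hT.subtree hu, by simp [BTree.state, BTree.counter]⟩

theorem IsRT.reachable_root_add (hT : B.IsRT T) (hu : u ∈ T.dom)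
    (h : B.Reachable (T.state u) (T.counter u + e)) :
    B.Reachable (T.state []) (T.counter [] + e) := by
  obtain ⟨S, hS, hroot⟩ := h
  exact ⟨T.graft u S e hu, hT.graft hS hu hroot, graft_label_of_prefix hroot List.nil_prefix⟩

theorem IsRT.reachable_add_of_prefix (hT : B.IsRT T) (hv : v ∈ T.dom) (huv : u <+: v)
    (h : B.Reachable (T.state v) (T.counter v + e)) :
    B.Reachable (T.state u) (T.counter u + e) := by
  obtain ⟨p, rfl⟩ := huv
  have hu := T.prefixClosed hv (List.prefix_append u p)
  simpa [BTree.state, BTree.counter] using (hT.subtree hu).reachable_root_add (u := p) hv h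

theorem IsRT.reachable_add_mul (hT : B.IsRT T) (hv : v ∈ T.dom) (huv : u <+: v)
    (hstate : T.state v = T.state u) (hcounter : T.counter v + d = T.counter u) (k : ℕ) :
    B.Reachable (T.state u) (T.counter u + k * d) := by
  induction k with
  | zero => simpa using hT.reachable (T.prefixClosed hv huv)
  | succ k ih =>
    refine hT.reachable_add_of_prefix hv huv ?_
    rwa [hstate, show T.counter v + (k + 1) * d = T.counter u + k * d by rw [← hcounter]; ring]

theorem reachSet_infinite_of_decreasing (hT : B.IsRT T) (hv : v ∈ T.dom)
    (hdec : T.Decreasing v) : (B.reachSet (T.state [])).Infinite := by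
  obtain ⟨u, -, huv, hstate, hlt⟩ := hdec
  obtain ⟨d, hd⟩ : ∃ d, T.counter v + d = T.counter u := ⟨_, Nat.add_sub_cancel' hlt.le⟩
  have hd0 : d ≠ 0 := by omega
  refine Set.infinite_of_injective_forall_mem (f := fun k => T.counter [] + k * d)
    ((add_right_injective _).comp (mul_left_injective₀ hd0)) fun k => ?_
  exact hT.reachable_add_of_prefix (T.prefixClosed hv huv.1) List.nil_prefix
    (hT.reachable_add_mul hv huv.1 hstate.symm hd k)

theorem IsRT.exists_child_counter_ge (hT : B.IsRT T) {x : List Bool} (hx : x ∈ T.dom)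
    (hpos : 0 < T.counter x) :
    ∃ b, x ++ [b] ∈ T.dom ∧ T.counter x ≤ 2 * T.counter (x ++ [b]) + 1 := by
  have hleaf : ¬ T.IsLeaf x := fun hl => hpos.ne' (hT.2 x hl).2
  rcases hT.1 x hx hleaf with ⟨hf, ht, -, hsum⟩ | ⟨hf, -, z, hun, hz⟩
  · rcases le_total (T.counter (x ++ [false])) (T.counter (x ++ [true])) with hle | hle
    · exact ⟨true, ht, by omega⟩
    · exact ⟨false, hf, by omega⟩
  · refine ⟨false, hf, ?_⟩
    rcases B.un_small _ _ _ hun with rfl | rfl | rfl <;> omega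

theorem IsRT.exists_descendant_counter_lt_of_length_le (hT : B.IsRT T) {c : ℕ} (hc : 0 < c) :
    ∀ n, ∀ x ∈ T.dom, (∀ y ∈ T.dom, y.length ≤ x.length + n) → c ≤ T.counter x →
      ∃ v ∈ T.dom, StrictPrefix x v ∧ T.counter v < c ∧ c ≤ 2 * T.counter v + 1 := by
  intro n
  induction n with
  | zero =>
    intro x hx hlen hcx
    obtain ⟨b, hb, -⟩ := hT.exists_child_counter_ge hx (by omega)
    simpa using hlen _ hb
  | succ n ih =>
    intro x hx hlen hcx
    obtain ⟨b, hb, hge⟩ := hT.exists_child_counter_ge hx (by omega)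
    by_cases hlt : T.counter (x ++ [b]) < c
    · exact ⟨x ++ [b], hb, .append_singleton x b, hlt, by omega⟩
    · obtain ⟨v, hv, hxv, hvc⟩ := ih (x ++ [b]) hb
        (fun y hy => by simpa [Nat.add_assoc, Nat.add_comm 1] using hlen y hy) (by omega)
      exact ⟨v, hv, (StrictPrefix.append_singleton x b).trans hxv, hvc⟩

theorem IsRT.exists_descendant_counter_lt (hT : B.IsRT T) {x : List Bool} (hx : x ∈ T.dom)
    (hpos : 0 < T.counter x) :
    ∃ v ∈ T.dom, StrictPrefix x v ∧ T.counter v < T.counter x ∧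
      T.counter x ≤ 2 * T.counter v + 1 := by
  obtain ⟨N, hN⟩ := T.exists_length_le
  exact hT.exists_descendant_counter_lt_of_length_le hpos N x hx
    (fun y hy => (hN y hy).trans (Nat.le_add_left _ _)) le_rfl

theorem IsRT.exists_dropsTo_chain (hT : B.IsRT T) :
    ∀ k, ∀ x ∈ T.dom, 2 ^ k ≤ T.counter x →
      ∃ l : List (List Bool), l.length = k ∧ (x :: l).Pairwise T.DropsTo := by
  intro k
  induction k with
  | zero => exact fun x _ _ => ⟨[], rfl, List.pairwise_singleton _ _⟩
  | succ k ih =>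
    intro x hx hcx
    obtain ⟨v, hv, hxv, hlt, hle⟩ :=
      hT.exists_descendant_counter_lt hx (lt_of_lt_of_le (by positivity) hcx)
    obtain ⟨l, hl, hchain⟩ := ih v hv (by rw [pow_succ] at hcx; omega)
    refine ⟨v :: l, by simp [hl], List.pairwise_cons.2 ⟨fun y hy => ?_, hchain⟩⟩
    rcases List.mem_cons.1 hy with rfl | hy
    · exact ⟨hv, hxv, hlt⟩
    · exact DropsTo.trans ⟨hv, hxv, hlt⟩ (List.rel_of_pairwise_cons hchain hy)

theorem IsRT.exists_decreasing [Fintype Q] (hT : B.IsRT T)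
    (h : 2 ^ Fintype.card Q ≤ T.counter []) : ∃ v ∈ T.dom, T.Decreasing v := by
  obtain ⟨l, hl, hchain⟩ := hT.exists_dropsTo_chain _ [] T.root_mem h
  by_contra! hnone
  have hnodup : (([] :: l).map T.state).Nodup := List.pairwise_map.2 <|
    hchain.imp fun {a b} hab heq =>
      hnone b hab.1 ⟨a, T.prefixClosed hab.1 hab.2.1.1, hab.2.1, heq, hab.2.2⟩
  simpa [hl] using hnodup.length_le_card

end BVASS1

/-- A state is unbounded iff its reachability set contains a value exceeding `2^|Q|`. -/
theorem stmt6 {Q : Type} [Fintype Q] (B : BVASS1 Q) (q : Q) :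
    (B.reachSet q).Infinite ↔ ∃ n ∈ B.reachSet q, 2 ^ Fintype.card Q < n := by
  refine ⟨fun h => h.exists_gt _, ?_⟩
  rintro ⟨n, ⟨T, hT, hroot⟩, hn⟩
  obtain ⟨v, hv, hdec⟩ := hT.exists_decreasing (by simp [BTree.counter, hroot]; omega)
  simpa [BTree.state, hroot] using BVASS1.reachSet_infinite_of_decreasing hT hv hdec
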